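/- Let k ≥ 2 and let G_k be the whiskered cycle graph on vertices {x_i, y_i : i ∈ [2k]}. In the polynomial ring K[x_1, …, x_{2k}, y_1, …, y_{2k}], the ideal ⟨X_C X_σ : C a minimal vertex cover of G_k, σ ⊆ {x_1, …, x_{2k}}, σ ∩ C = ∅, |σ| = k⟩ (which is the k-th homological shift ideal HS_k(J(G_k)) of the vertex cover ideal of G_k) equals (∏_{i=1}^{2k} x_i) · ⟨y_1 y_3 ⋯ y_{2k−1}, y_2 y_4 ⋯ y_{2k}⟩. -/

import Mathlib

open scoped Classical

namespace PaperHS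

/-- A set of vertices is a vertex cover of a simple graph if it meets every edge. -/
def IsVertexCover {U : Type*} (H : SimpleGraph U) (C : Set U) : Prop :=
  ∀ ⦃a b : U⦄, H.Adj a b → a ∈ C ∨ b ∈ C

/-- A vertex cover is minimal if no proper subset is a vertex cover. -/
def IsMinVertexCover {U : Type*} (H : SimpleGraph U) (C : Set U) : Prop :=
  IsVertexCover H C ∧ ∀ D : Set U, D ⊂ C → ¬ IsVertexCover H D

/-- The whiskered cycle `G_k = W(C_{2k})`: the vertex `x_{i+1}` of the cycle is
encoded as `Sum.inl i` and the whisker vertex `y_{i+1}` as `Sum.inr i`. -/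
def whiskCycle (k : ℕ) : SimpleGraph (Fin (2 * k) ⊕ Fin (2 * k)) :=
  SimpleGraph.fromRel (fun x y =>
    match x, y with
    | Sum.inl i, Sum.inl j => (j : ℕ) = ((i : ℕ) + 1) % (2 * k)
    | Sum.inl i, Sum.inr j => i = j
    | _, _ => False)

/-! A minimal vertex cover `C` of the whiskered cycle contains exactly one of `x_i, y_i` for each
`i`, and the set `S` of indices `i` with `y_i ∈ C` is an independent set of the cycle `C_{2k}`.
Since `σ` avoids `C`, it lies in `{x_i : i ∈ S}`; as `S` is disjoint from its rotation `S + 1`,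
`|S| ≤ k`, so `|σ| = k` forces `σ = {x_i : i ∈ S}` and `|S| = k`, whence
`X_C X_σ = (∏ x_i) ∏_{i ∈ S} y_i`. Finally `|S| = k` means that `S + 1` is the complement of `S`,
i.e. `S` alternates around the cycle, so `S` is the set of even or of odd indices. -/

open Finset

section Cycle

variable {n : ℕ}

lemma val_finRotate (i : Fin n) : (finRotate n i : ℕ) = ((i : ℕ) + 1) % n := by
  have := i.neZero
  rw [finRotate_apply, Fin.val_add, Fin.val_one', Nat.add_mod_mod]

lemma even_val_finRotate_iff (hn : Even n) (i : Fin n) :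
    Even (finRotate n i : ℕ) ↔ ¬ Even (i : ℕ) := by
  rw [val_finRotate]
  obtain ⟨m, rfl⟩ := hn
  rcases Nat.lt_or_ge ((i : ℕ) + 1) (m + m) with hi | hi
  · rw [Nat.mod_eq_of_lt hi, Nat.even_add_one]
  · rw [show (i : ℕ) + 1 = m + m by omega, Nat.mod_self]
    have := i.isLt
    rw [Nat.even_iff, Nat.even_iff]
    omega

lemma iff_of_forall_finRotate_iff {P : Fin n → Prop} (hP : ∀ i, P (finRotate n i) ↔ P i)
    (i j : Fin n) : P i ↔ P j := by
  have := i.neZero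
  have iterate : ∀ m x, P ((finRotate n)^[m] x) ↔ P x := by
    intro m
    induction m with
    | zero => simp
    | succ m ih => intro x; rw [Function.iterate_succ_apply', hP, ih]
  rw [← iterate (j - i).val i, ← finCycle_eq_finRotate_iterate, finCycle_apply, add_sub_cancel]

def IsCycleIndep (S : Finset (Fin n)) : Prop :=
  ∀ i ∈ S, finRotate n i ∉ S

def IsAlternating (S : Finset (Fin n)) : Prop :=
  ∀ i, finRotate n i ∈ S ↔ i ∉ S

lemma IsCycleIndep.disjoint_map {S : Finset (Fin n)} (hS : IsCycleIndep S) :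
    Disjoint S (S.map (finRotate n).toEmbedding) := by
  rw [disjoint_left]
  intro j hj hj'
  obtain ⟨i, hi, rfl⟩ := mem_map.1 hj'
  exact hS i hi hj

lemma IsCycleIndep.two_mul_card_le {S : Finset (Fin n)} (hS : IsCycleIndep S) :
    2 * #S ≤ n := by
  have := card_le_univ (S ∪ S.map (finRotate n).toEmbedding)
  rw [card_union_of_disjoint hS.disjoint_map, card_map, Fintype.card_fin] at this
  omega

lemma isAlternating_iff_isCycleIndep_and_two_mul_card_eq {S : Finset (Fin n)} :
    IsAlternating S ↔ IsCycleIndep S ∧ 2 * #S = n := by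
  constructor
  · intro hS
    refine ⟨fun i hi h => (hS i).1 h hi, ?_⟩
    have hmap : S.map (finRotate n).toEmbedding = Sᶜ := by
      ext j
      have := hS ((finRotate n).symm j)
      rw [Equiv.apply_symm_apply] at this
      rw [mem_map_equiv, mem_compl]
      tauto
    have := card_compl S
    rw [← hmap, card_map, Fintype.card_fin] at this
    omega
  · rintro ⟨hS, hcard⟩ i
    refine ⟨fun h hi => hS i hi h, fun hi => ?_⟩
    have hunion : S ∪ S.map (finRotate n).toEmbedding = univ := by
      refine eq_univ_of_card _ ?_
      rw [card_union_of_disjoint hS.disjoint_map, card_map, Fintype.card_fin]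
      omega
    have := hunion ▸ mem_univ (finRotate n i)
    rw [mem_union, mem_map_equiv, Equiv.symm_apply_apply] at this
    tauto

lemma isAlternating_iff_eq_evens_or_odds (hn : Even n) {S : Finset (Fin n)} :
    IsAlternating S ↔
      S = univ.filter (fun i : Fin n => Even (i : ℕ)) ∨
        S = univ.filter (fun i : Fin n => ¬ Even (i : ℕ)) := by
  constructor
  · intro hS
    have hP := iff_of_forall_finRotate_iff (P := fun i => i ∈ S ↔ Even (i : ℕ)) fun i => by
      rw [hS, even_val_finRotate_iff hn]
      tauto
    by_cases h : ∀ i, i ∈ S ↔ Even (i : ℕ)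
    · left
      ext i
      simp [h]
    · right
      push Not at h
      obtain ⟨j, hj⟩ := h
      ext i
      have := (hP i j).not
      simp only [mem_filter, mem_univ, true_and]
      tauto
  · rintro (rfl | rfl) i <;>
      simp only [mem_filter, mem_univ, true_and, even_val_finRotate_iff hn, not_not]

end Cycle

lemma isMinVertexCover_iff {U : Type*} {H : SimpleGraph U} {C : Set U} :
    IsMinVertexCover H C ↔ IsVertexCover H C ∧ ∀ c ∈ C, ∃ d, H.Adj c d ∧ d ∉ C := by
  constructor
  · rintro ⟨hC, hmin⟩
    refine ⟨hC, fun c hc => ?_⟩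
    by_contra! hnbrs
    refine hmin (C \ {c}) (Set.sdiff_singleton_ssubset.2 hc) fun a b hab => ?_
    by_cases ha : a = c
    · subst ha
      exact Or.inr ⟨hnbrs b hab, hab.ne.symm⟩
    by_cases hb : b = c
    · subst hb
      exact Or.inl ⟨hnbrs a hab.symm, hab.ne⟩
    exact (hC hab).imp (fun h => ⟨h, ha⟩) (fun h => ⟨h, hb⟩)
  · rintro ⟨hC, hcrit⟩
    refine ⟨hC, fun D hDC hD => ?_⟩
    obtain ⟨c, hcC, hcD⟩ := Set.exists_of_ssubset hDC
    obtain ⟨d, hcd, hdC⟩ := hcrit c hcC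
    exact (hD hcd).elim hcD fun hd => hdC (hDC.subset hd)

lemma prod_compl_disjSum_mul_prod_inl {ι M : Type*} [Fintype ι] [DecidableEq ι] [CommMonoid M]
    (S : Finset ι) (f : ι ⊕ ι → M) :
    (∏ x ∈ Sᶜ.disjSum S, f x) * ∏ i ∈ S, f (Sum.inl i) =
      (∏ i, f (Sum.inl i)) * ∏ i ∈ S, f (Sum.inr i) := by
  rw [prod_disjSum, mul_right_comm, prod_compl_mul_prod]

section WhiskeredCycle

variable {k : ℕ}

open Sum

@[simp]
lemma whiskCycle_adj_inl_inl {i j : Fin (2 * k)} :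
    (whiskCycle k).Adj (inl i) (inl j) ↔ j = finRotate _ i ∨ i = finRotate _ j := by
  have hne : ∀ i : Fin (2 * k), finRotate _ i ≠ i := fun i h => by
    have := even_val_finRotate_iff (even_two_mul k) i
    rw [h] at this
    tauto
  simp only [whiskCycle, SimpleGraph.fromRel_adj, ne_eq, inl.injEq, Fin.ext_iff, val_finRotate]
  constructor
  · exact fun h => h.2
  · rintro (h | h)
    · exact ⟨fun hij => hne i (Fin.ext (by rw [val_finRotate, ← h, hij])), Or.inl h⟩
    · exact ⟨fun hij => hne j (Fin.ext (by rw [val_finRotate, ← h, hij])), Or.inr h⟩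

@[simp]
lemma whiskCycle_adj_inl_inr {i j : Fin (2 * k)} :
    (whiskCycle k).Adj (inl i) (inr j) ↔ i = j := by
  simp [whiskCycle, SimpleGraph.fromRel_adj]

@[simp]
lemma whiskCycle_adj_inr_inl {i j : Fin (2 * k)} :
    (whiskCycle k).Adj (inr i) (inl j) ↔ i = j := by
  rw [SimpleGraph.adj_comm, whiskCycle_adj_inl_inr, eq_comm]

@[simp]
lemma whiskCycle_not_adj_inr_inr {i j : Fin (2 * k)} : ¬ (whiskCycle k).Adj (inr i) (inr j) := by
  simp [whiskCycle, SimpleGraph.fromRel_adj]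

lemma isMinVertexCover_whiskCycle_iff {C : Finset (Fin (2 * k) ⊕ Fin (2 * k))} :
    IsMinVertexCover (whiskCycle k) ↑C ↔ ∃ S, IsCycleIndep S ∧ C = Sᶜ.disjSum S := by
  rw [isMinVertexCover_iff]
  constructor
  · rintro ⟨hcov, hcrit⟩
    refine ⟨univ.filter fun i => inl i ∉ C, fun i hi hri => ?_, ?_⟩
    · simp only [mem_filter, mem_univ, true_and] at hi hri
      exact (hcov (whiskCycle_adj_inl_inl.2 (Or.inl rfl))).elim hi hri
    ext (i | i)
    · simp
    · simp only [inr_mem_disjSum, mem_filter, mem_univ, true_and]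
      refine ⟨fun hi => ?_, fun hi => (hcov (whiskCycle_adj_inl_inr.2 rfl)).resolve_left hi⟩
      obtain ⟨(j | j), hij, hjC⟩ := hcrit (inr i) hi
      · rwa [whiskCycle_adj_inr_inl.1 hij]
      · exact absurd hij whiskCycle_not_adj_inr_inr
  · rintro ⟨S, hS, rfl⟩
    refine ⟨?_, ?_⟩
    · rintro (i | i) (j | j) hij
      · rcases whiskCycle_adj_inl_inl.1 hij with rfl | rfl
        · simpa [or_iff_not_imp_left] using hS i
        · simpa [or_iff_not_imp_right] using hS j
      · obtain rfl := whiskCycle_adj_inl_inr.1 hij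
        simpa using em' (i ∈ S)
      · obtain rfl := whiskCycle_adj_inr_inl.1 hij
        simpa using em (i ∈ S)
      · exact absurd hij whiskCycle_not_adj_inr_inr
    · rintro (i | i) hi
      · exact ⟨inr i, whiskCycle_adj_inl_inr.2 rfl, by simpa using hi⟩
      · exact ⟨inl i, whiskCycle_adj_inr_inl.2 rfl, by simpa using hi⟩

lemma setOf_cover_monomials_eq_image {R : Type*} [CommSemiring R] :
    { m : MvPolynomial (Fin (2 * k) ⊕ Fin (2 * k)) R |
        ∃ C σ : Finset (Fin (2 * k) ⊕ Fin (2 * k)),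
          IsMinVertexCover (whiskCycle k) ↑C ∧
          (∀ z ∈ σ, ∃ i : Fin (2 * k), z = inl i) ∧
          (∀ z ∈ σ, z ∉ C) ∧ #σ = k ∧
          m = (∏ x ∈ C, MvPolynomial.X x) * ∏ x ∈ σ, MvPolynomial.X x }
      = (fun S => (∏ i, MvPolynomial.X (inl i)) * ∏ i ∈ S, MvPolynomial.X (inr i)) ''
          {S | IsAlternating S} := by
  ext m
  simp only [Set.mem_ofPred_eq, Set.mem_image, isAlternating_iff_isCycleIndep_and_two_mul_card_eq]
  constructor
  · rintro ⟨C, σ, hC, hσinl, hσC, hσcard, rfl⟩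
    obtain ⟨S, hS, rfl⟩ := isMinVertexCover_whiskCycle_iff.1 hC
    have hσS : σ ⊆ S.map .inl := fun z hz => by
      obtain ⟨i, rfl⟩ := hσinl z hz
      simpa using hσC _ hz
    have hSk := hS.two_mul_card_le
    have hσ : σ = S.map .inl :=
      eq_of_subset_of_card_le hσS (by rw [card_map]; omega)
    refine ⟨S, ⟨hS, by rw [hσ, card_map] at hσcard; omega⟩, ?_⟩
    rw [hσ, prod_map]
    exact (prod_compl_disjSum_mul_prod_inl S _).symm
  · rintro ⟨S, ⟨hS, hcard⟩, rfl⟩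
    refine ⟨Sᶜ.disjSum S, S.map .inl, isMinVertexCover_whiskCycle_iff.2 ⟨S, hS, rfl⟩,
      by simp, by simp, by rw [card_map]; omega, ?_⟩
    rw [prod_map]
    exact (prod_compl_disjSum_mul_prod_inl S _).symm

end WhiskeredCycle

theorem statement8_general (k : ℕ) (K : Type*) [Field K] :
    Ideal.span { m : MvPolynomial (Fin (2 * k) ⊕ Fin (2 * k)) K |
        ∃ C σ : Finset (Fin (2 * k) ⊕ Fin (2 * k)),
          IsMinVertexCover (whiskCycle k) ↑C ∧
          (∀ z ∈ σ, ∃ i : Fin (2 * k), z = Sum.inl i) ∧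
          (∀ z ∈ σ, z ∉ C) ∧ σ.card = k ∧
          m = (∏ x ∈ C, MvPolynomial.X x) * ∏ x ∈ σ, MvPolynomial.X x }
      = Ideal.span
          { (∏ i : Fin (2 * k), (MvPolynomial.X (Sum.inl i) :
                MvPolynomial (Fin (2 * k) ⊕ Fin (2 * k)) K)) *
              ∏ i ∈ Finset.univ.filter (fun i : Fin (2 * k) => Even (i : ℕ)),
                MvPolynomial.X (Sum.inr i),
            (∏ i : Fin (2 * k), (MvPolynomial.X (Sum.inl i) :
                MvPolynomial (Fin (2 * k) ⊕ Fin (2 * k)) K)) *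
              ∏ i ∈ Finset.univ.filter (fun i : Fin (2 * k) => ¬ Even (i : ℕ)),
                MvPolynomial.X (Sum.inr i) } := by
  have hS : {S : Finset (Fin (2 * k)) | IsAlternating S} =
      {univ.filter fun i : Fin (2 * k) => Even (i : ℕ),
        univ.filter fun i : Fin (2 * k) => ¬ Even (i : ℕ)} :=
    Set.ext fun _ => isAlternating_iff_eq_evens_or_odds (even_two_mul k)
  rw [setOf_cover_monomials_eq_image, hS, Set.image_pair]

theorem statement8 (k : ℕ) (hk : 2 ≤ k) (K : Type*) [Field K] :
    Ideal.span { m : MvPolynomial (Fin (2 * k) ⊕ Fin (2 * k)) K |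
        ∃ C σ : Finset (Fin (2 * k) ⊕ Fin (2 * k)),
          IsMinVertexCover (whiskCycle k) ↑C ∧
          (∀ z ∈ σ, ∃ i : Fin (2 * k), z = Sum.inl i) ∧
          (∀ z ∈ σ, z ∉ C) ∧ σ.card = k ∧
          m = (∏ x ∈ C, MvPolynomial.X x) * ∏ x ∈ σ, MvPolynomial.X x }
      = Ideal.span
          { (∏ i : Fin (2 * k), (MvPolynomial.X (Sum.inl i) :
                MvPolynomial (Fin (2 * k) ⊕ Fin (2 * k)) K)) *
              ∏ i ∈ Finset.univ.filter (fun i : Fin (2 * k) => Even (i : ℕ)),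
                MvPolynomial.X (Sum.inr i),
            (∏ i : Fin (2 * k), (MvPolynomial.X (Sum.inl i) :
                MvPolynomial (Fin (2 * k) ⊕ Fin (2 * k)) K)) *
              ∏ i ∈ Finset.univ.filter (fun i : Fin (2 * k) => ¬ Even (i : ℕ)),
                MvPolynomial.X (Sum.inr i) } :=
  statement8_general k K

end PaperHS
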